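/- arXiv:2103.04127 — 10 statements merged into one kernel-verified Lean document; each statement's English description precedes it below -/
import Mathlib

section
/- Let θ ∈ (0, π/2] and let A be a real n×n matrix with a_ii < 0 and sin(θ)·|a_ii| > Σ_{j≠i}|a_ij| for all i. Then every eigenvalue λ of A lies in the open conic sector ℂ⁰_θ = {z = x+iy : x < 0 and |y| < (−x)·tan θ}. -/
/-!
By Gershgorin's theorem every eigenvalue lies within distance `∑_{j≠k} |a_kj| < sin θ · |a_kk|` of
some diagonal entry `a_kk < 0`. The disc of radius `sin θ · |c|` about a point `c < 0` is inscribed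
in the sector of half-angle `θ` around the negative axis, touching both boundary rays, so the open
disc lies in the open sector.
-/

theorem Matrix.exists_norm_sub_diag_le_of_mem_spectrum_map_ofReal {ι : Type*} [Fintype ι]
    [DecidableEq ι] (A : Matrix ι ι ℝ) {lam : ℂ} (hlam : lam ∈ spectrum ℂ (A.map Complex.ofReal)) :
    ∃ k, ‖lam - A k k‖ ≤ ∑ j ∈ Finset.univ.erase k, |A k j| := by
  rw [← Matrix.spectrum_toLin', ← Module.End.hasEigenvalue_iff_mem_spectrum] at hlam
  obtain ⟨k, hk⟩ := eigenvalue_mem_ball hlam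
  refine ⟨k, ?_⟩
  simpa only [Metric.mem_closedBall, dist_eq_norm, Matrix.map_apply, Complex.norm_real,
    Real.norm_eq_abs] using hk

open Real in
theorem sq_mul_cos_lt_sq_mul_sin_of_sq_add_sq_lt {θ c x y : ℝ} (hx : x ≠ 0)
    (h : (x - c) ^ 2 + y ^ 2 < sin θ ^ 2 * c ^ 2) : (y * cos θ) ^ 2 < (x * sin θ) ^ 2 := by
  have hsin : sin θ ≠ 0 := by
    rintro hs
    rw [hs] at h
    nlinarith [sq_nonneg (x - c), sq_nonneg y]
  have hgap : (x * sin θ) ^ 2 - cos θ ^ 2 * (sin θ ^ 2 * c ^ 2 - (x - c) ^ 2)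
      = (x - cos θ ^ 2 * c) ^ 2 := by
    rw [mul_pow, sin_sq]; ring
  rcases (sq_nonneg (cos θ)).lt_or_eq with hcos | hcos
  · calc (y * cos θ) ^ 2 = cos θ ^ 2 * y ^ 2 := by ring
      _ < cos θ ^ 2 * (sin θ ^ 2 * c ^ 2 - (x - c) ^ 2) := by gcongr; linarith
      _ ≤ (x * sin θ) ^ 2 := by linarith [sq_nonneg (x - cos θ ^ 2 * c)]
  · rw [mul_pow, ← hcos, mul_zero]
    exact sq_pos_of_ne_zero (mul_ne_zero hx hsin)

theorem Complex.re_neg_and_abs_im_mul_cos_lt_of_norm_sub_lt {θ c : ℝ} {z : ℂ} (hc : c < 0)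
    (hz : ‖z - c‖ < Real.sin θ * |c|) :
    z.re < 0 ∧ |z.im| * Real.cos θ < -z.re * Real.sin θ := by
  have hdisc : (z.re - c) ^ 2 + z.im ^ 2 < Real.sin θ ^ 2 * c ^ 2 := by
    have hnorm : ‖z - c‖ ^ 2 = (z.re - c) ^ 2 + z.im ^ 2 := by
      rw [Complex.sq_norm, Complex.normSq_apply]
      simp only [Complex.sub_re, Complex.sub_im, Complex.ofReal_re, Complex.ofReal_im, sub_zero]
      ring
    rw [← hnorm, ← sq_abs c, ← mul_pow]
    exact pow_lt_pow_left₀ hz (norm_nonneg _) two_ne_zero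
  have hsin : 0 < Real.sin θ := pos_of_mul_pos_left ((norm_nonneg _).trans_lt hz) (abs_nonneg c)
  have hre : z.re < 0 := by
    by_contra! hre
    nlinarith [Real.sin_sq_le_one θ, sq_nonneg z.im, sq_nonneg c]
  refine ⟨hre, ?_⟩
  calc |z.im| * Real.cos θ ≤ |z.im * Real.cos θ| := by
        rw [abs_mul]; exact mul_le_mul_of_nonneg_left (le_abs_self _) (abs_nonneg _)
    _ < |z.re * Real.sin θ| := sq_lt_sq.mp (sq_mul_cos_lt_sq_mul_sin_of_sq_add_sq_lt hre.ne hdisc)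
    _ = -z.re * Real.sin θ := by rw [abs_mul, abs_of_neg hre, abs_of_pos hsin]

theorem sector_dominance_spectrum_general {n : ℕ} (θ : ℝ)
    (A : Matrix (Fin n) (Fin n) ℝ)
    (hneg : ∀ i, A i i < 0)
    (hdom : ∀ i, ∑ j ∈ Finset.univ.erase i, |A i j| < Real.sin θ * |A i i|) :
    ∀ lam ∈ spectrum ℂ (A.map (Complex.ofReal)),
      lam.re < 0 ∧ |lam.im| * Real.cos θ < (-lam.re) * Real.sin θ := by
  intro lam hlam
  obtain ⟨k, hk⟩ := A.exists_norm_sub_diag_le_of_mem_spectrum_map_ofReal hlam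
  exact Complex.re_neg_and_abs_im_mul_cos_lt_of_norm_sub_lt (hneg k) (hk.trans_lt (hdom k))

/-- Diagonal ℂ⁰_θ-dominance implies the spectrum lies in the open conic sector
{z = x+iy : x < 0 and |y| < (−x)·tan θ}, expressed as |y|·cos θ < (−x)·sin θ. -/
theorem sector_dominance_spectrum {n : ℕ} (θ : ℝ) (hθ : 0 < θ ∧ θ ≤ Real.pi / 2)
    (A : Matrix (Fin n) (Fin n) ℝ)
    (hneg : ∀ i, A i i < 0)
    (hdom : ∀ i, ∑ j ∈ Finset.univ.erase i, |A i j| < Real.sin θ * |A i i|) :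
    ∀ lam ∈ spectrum ℂ (A.map (Complex.ofReal)),
      lam.re < 0 ∧ |lam.im| * Real.cos θ < (-lam.re) * Real.sin θ :=
  sector_dominance_spectrum_general θ A hneg hdom
end

section
/- Let θ ∈ (0, π/2] and let A be a real n×n matrix that is diagonally ℂ⁰_θ-dominant. Then for every positive diagonal matrix D, every eigenvalue λ of DA lies in the open conic sector ℂ⁰_θ around the negative real axis with half-angle θ. -/
/-!
By Gershgorin, every eigenvalue of `DA` lies in a disc centred at some `dₖ aₖₖ < 0` of radius
`dₖ ∑_{j≠k} |aₖⱼ|`, and scaling row `k` by `dₖ > 0` preserves the dominance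
`∑_{j≠k} |aₖⱼ| < sin θ · |aₖₖ|`. A disc centred at `c < 0` of radius less than `sin θ · |c|` lies
in the sector of half-angle `θ`, since `sin θ · |c|` is the distance from `c` to its boundary rays.
-/

open Finset Matrix

/-- The open sector `ℂ⁰_θ`, with `|y| < (-x) tan θ` written as `|y| cos θ < (-x) sin θ`. -/
def negSector (θ : ℝ) : Set ℂ :=
  {z | z.re < 0 ∧ |z.im| * Real.cos θ < -z.re * Real.sin θ}

theorem mem_negSector_of_norm_sub_lt {θ c : ℝ} {z : ℂ} (hc : c < 0)
    (hz : ‖z - c‖ < Real.sin θ * -c) : z ∈ negSector θ := by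
  have hsq : ‖z - c‖ ^ 2 = (z.re - c) ^ 2 + z.im ^ 2 := by
    rw [Complex.sq_norm, Complex.normSq_apply]
    simp only [Complex.sub_re, Complex.ofReal_re, Complex.sub_im, Complex.ofReal_im, sub_zero]
    ring
  have hpyth := Real.sin_sq_add_cos_sq θ
  have hs_le_one := Real.sin_le_one θ
  have hre : |z.re - c| < -c := by
    calc |z.re - c| = |(z - c).re| := by simp
      _ ≤ ‖z - c‖ := Complex.abs_re_le_norm _
      _ < Real.sin θ * -c := hz
      _ ≤ -c := by nlinarith
  -- Cauchy–Schwarz for `(c - x, |y|)` against the unit vector `(sin θ, -cos θ)`.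
  have hcs : ((c - z.re) * Real.sin θ - |z.im| * Real.cos θ) ^ 2 ≤ ‖z - c‖ ^ 2 := by
    nlinarith [sq_abs z.im, sq_nonneg ((c - z.re) * Real.cos θ + |z.im| * Real.sin θ)]
  have hcs' := (abs_le_of_sq_le_sq' hcs (norm_nonneg _)).1
  exact ⟨by linarith [(abs_lt.1 hre).2], by linarith⟩

theorem spectrum_map_ofReal_subset_negSector {ι : Type*} [Fintype ι] [DecidableEq ι] {θ : ℝ}
    {B : Matrix ι ι ℝ} (hneg : ∀ i, B i i < 0)
    (hdom : ∀ i, ∑ j ∈ univ.erase i, |B i j| < Real.sin θ * |B i i|) :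
    spectrum ℂ (B.map Complex.ofReal) ⊆ negSector θ := by
  intro μ hμ
  obtain ⟨k, hk⟩ := eigenvalue_mem_ball (A := B.map Complex.ofReal) <|
    Module.End.hasEigenvalue_iff_mem_spectrum.2 (by rwa [spectrum_toLin'])
  refine mem_negSector_of_norm_sub_lt (hneg k) ?_
  calc ‖μ - B k k‖ ≤ ∑ j ∈ univ.erase k, |B k j| := by
        simpa only [Metric.mem_closedBall, dist_eq_norm, map_apply, Complex.norm_real,
          Real.norm_eq_abs] using hk
    _ < Real.sin θ * |B k k| := hdom k
    _ = Real.sin θ * -B k k := by rw [abs_of_neg (hneg k)]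

theorem sum_erase_abs_diagonal_mul_lt {ι : Type*} [Fintype ι] [DecidableEq ι] {s : ℝ}
    {A : Matrix ι ι ℝ} (hdom : ∀ i, ∑ j ∈ univ.erase i, |A i j| < s * |A i i|)
    {d : ι → ℝ} (hd : ∀ i, 0 < d i) (i : ι) :
    ∑ j ∈ univ.erase i, |(diagonal d * A) i j| < s * |(diagonal d * A) i i| := by
  simp only [diagonal_mul, abs_mul, abs_of_pos (hd i), ← mul_sum]
  nlinarith [hdom i, hd i]

theorem sector_D_stability_general {n : ℕ} (θ : ℝ)
    (A : Matrix (Fin n) (Fin n) ℝ)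
    (hneg : ∀ i, A i i < 0)
    (hdom : ∀ i, ∑ j ∈ Finset.univ.erase i, |A i j| < Real.sin θ * |A i i|)
    (d : Fin n → ℝ) (hd : ∀ i, 0 < d i) :
    ∀ lam ∈ spectrum ℂ ((Matrix.diagonal d * A).map (Complex.ofReal)),
      lam.re < 0 ∧ |lam.im| * Real.cos θ < (-lam.re) * Real.sin θ :=
  spectrum_map_ofReal_subset_negSector
    (fun i => by simpa only [diagonal_mul] using mul_neg_of_pos_of_neg (hd i) (hneg i))
    (sum_erase_abs_diagonal_mul_lt hdom hd)

/-- Diagonal ℂ⁰_θ-dominance implies (ℂ⁰_θ, D)-stability: for every positive diagonal D,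
the spectrum of DA lies in the sector {x+iy : x < 0, |y| < (−x)tan θ}
(expressed as |y|·cos θ < (−x)·sin θ). -/
theorem sector_D_stability {n : ℕ} (θ : ℝ) (hθ : 0 < θ ∧ θ ≤ Real.pi / 2)
    (A : Matrix (Fin n) (Fin n) ℝ)
    (hneg : ∀ i, A i i < 0)
    (hdom : ∀ i, ∑ j ∈ Finset.univ.erase i, |A i j| < Real.sin θ * |A i i|)
    (d : Fin n → ℝ) (hd : ∀ i, 0 < d i) :
    ∀ lam ∈ spectrum ℂ ((Matrix.diagonal d * A).map (Complex.ofReal)),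
      lam.re < 0 ∧ |lam.im| * Real.cos θ < (-lam.re) * Real.sin θ :=
  sector_D_stability_general θ A hneg hdom d hd
end

section
/- Let A, B be real n×n matrices with B negative diagonal (b_ij = 0 for i ≠ j and b_ii < 0), and suppose A is diagonally stable, i.e., there exists a positive diagonal matrix D_A such that D_A·A + Aᵀ·D_A is negative definite. Then the 2n×2n block matrix à = [[A, B],[I, O]] is Hurwitz stable. -/
open Matrix Complex Finset

lemma key_pos {n : ℕ} {N : Matrix (Fin n) (Fin n) ℝ} (hN : N.PosDef)
    (y : Fin n → ℂ) (hy : y ≠ 0) :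
    0 < (∑ i, ∑ j, (N i j : ℂ) * (starRingEnd ℂ) (y i) * y j).re := by
  set a : Fin n → ℝ := fun i => (y i).re with ha
  set b : Fin n → ℝ := fun i => (y i).im with hb
  have hre : (∑ i, ∑ j, (N i j : ℂ) * (starRingEnd ℂ) (y i) * y j).re
      = (∑ i, ∑ j, N i j * (a i * a j)) + (∑ i, ∑ j, N i j * (b i * b j)) := by
    rw [Complex.re_sum]
    rw [← Finset.sum_add_distrib]
    refine Finset.sum_congr rfl fun i _ => ?_
    rw [Complex.re_sum, ← Finset.sum_add_distrib]
    refine Finset.sum_congr rfl fun j _ => ?_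
    simp [Complex.mul_re, Complex.mul_im, Complex.ofReal_re, Complex.ofReal_im]
    ring
  rw [hre]
  have hquad : ∀ v : Fin n → ℝ, (∑ i, ∑ j, N i j * (v i * v j)) = star v ⬝ᵥ N *ᵥ v := by
    intro v
    simp [dotProduct, Matrix.mulVec, Finset.mul_sum]
    refine Finset.sum_congr rfl fun i _ => Finset.sum_congr rfl fun j _ => by ring
  have hab : a ≠ 0 ∨ b ≠ 0 := by
    by_contra h
    push_neg at h
    exact hy (funext fun i => Complex.ext (congrFun h.1 i) (congrFun h.2 i))
  have hnn : ∀ v : Fin n → ℝ, 0 ≤ ∑ i, ∑ j, N i j * (v i * v j) := by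
    intro v; rw [hquad]; simpa using hN.posSemidef.dotProduct_mulVec_nonneg v
  have hpos : ∀ v : Fin n → ℝ, v ≠ 0 → 0 < ∑ i, ∑ j, N i j * (v i * v j) := by
    intro v hv; rw [hquad]; simpa using hN.dotProduct_mulVec_pos hv
  rcases hab with h | h
  · have := hpos a h; have := hnn b; linarith
  · have := hpos b h; have := hnn a; linarith

theorem diag_stable_second_order {n : ℕ} (A B : Matrix (Fin n) (Fin n) ℝ)
    (hBdiag : ∀ i j, i ≠ j → B i j = 0) (hBneg : ∀ i, B i i < 0)
    (hA : ∃ d : Fin n → ℝ, (∀ i, 0 < d i) ∧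
      (-(Matrix.diagonal d * A + A.transpose * Matrix.diagonal d)).PosDef) :
    ∀ lam ∈ spectrum ℂ ((Matrix.fromBlocks A B (1 : Matrix (Fin n) (Fin n) ℝ)
        (0 : Matrix (Fin n) (Fin n) ℝ)).map (Complex.ofReal)),
      lam.re < 0 := by
  obtain ⟨d, hd, hPD⟩ := hA
  intro lam hlam
  set M := (Matrix.fromBlocks A B (1 : Matrix (Fin n) (Fin n) ℝ)
      (0 : Matrix (Fin n) (Fin n) ℝ)).map (Complex.ofReal) with hM
  rw [spectrum.mem_iff] at hlam
  have hdet : (algebraMap ℂ (Matrix (Fin n ⊕ Fin n) (Fin n ⊕ Fin n) ℂ) lam - M).det = 0 := by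
    by_contra h
    exact hlam ((Matrix.isUnit_iff_isUnit_det _).mpr (isUnit_iff_ne_zero.mpr h))
  obtain ⟨v, hv0, hv⟩ := Matrix.exists_mulVec_eq_zero_iff.mpr hdet
  have hMv : M *ᵥ v = lam • v := by
    have h1 : (algebraMap ℂ (Matrix (Fin n ⊕ Fin n) (Fin n ⊕ Fin n) ℂ) lam) *ᵥ v
        - M *ᵥ v = 0 := by rw [← Matrix.sub_mulVec]; exact hv
    have h2 : (algebraMap ℂ (Matrix (Fin n ⊕ Fin n) (Fin n ⊕ Fin n) ℂ) lam) *ᵥ v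
        = lam • v := by
      rw [Matrix.algebraMap_eq_diagonal]
      funext i
      simp [Matrix.mulVec_diagonal, Pi.algebraMap_apply]
    rw [h2] at h1
    exact (sub_eq_zero.mp h1).symm
  -- decompose the eigenvector
  set x : Fin n → ℂ := fun i => v (Sum.inl i) with hxdef
  set y : Fin n → ℂ := fun i => v (Sum.inr i) with hydef
  have hvelim : v = Sum.elim x y := by funext s; cases s <;> rfl
  have h1map : (1 : Matrix (Fin n) (Fin n) ℝ).map Complex.ofReal = 1 :=
    Matrix.map_one _ Complex.ofReal_zero Complex.ofReal_one
  have h0map : (0 : Matrix (Fin n) (Fin n) ℝ).map Complex.ofReal = 0 :=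
    Matrix.map_zero _ Complex.ofReal_zero
  have hMform : M = Matrix.fromBlocks (A.map Complex.ofReal) (B.map Complex.ofReal)
      (1 : Matrix (Fin n) (Fin n) ℂ) (0 : Matrix (Fin n) (Fin n) ℂ) := by
    rw [hM, Matrix.fromBlocks_map, h1map, h0map]
  rw [hvelim, hMform, Matrix.fromBlocks_mulVec] at hMv
  have hxy : ∀ i, x i = lam * y i := by
    intro i
    have h := congrFun hMv (Sum.inr i)
    simpa [Matrix.one_mulVec, Matrix.zero_mulVec] using h
  have heq : ∀ i, (A.map Complex.ofReal *ᵥ x) i + (B.map Complex.ofReal *ᵥ y) i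
      = lam * x i := by
    intro i
    have h := congrFun hMv (Sum.inl i)
    simpa using h
  have hy0 : y ≠ 0 := by
    intro h
    apply hv0
    rw [hvelim]
    funext s
    cases s with
    | inl i => simp [Sum.elim_inl, hxy i, congrFun h i]
    | inr i => simp [Sum.elim_inr, congrFun h i]
  have hxs : x = lam • y := funext fun i => by simpa using hxy i
  have hmain : ∀ i, lam * (A.map Complex.ofReal *ᵥ y) i + (B i i : ℂ) * y i
      = lam ^ 2 * y i := by
    intro i
    have hBy : (B.map Complex.ofReal *ᵥ y) i = (B i i : ℂ) * y i := by
      rw [Matrix.mulVec, dotProduct]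
      rw [Finset.sum_eq_single i]
      · simp [Matrix.map_apply]
      · intro j _ hj
        simp [Matrix.map_apply, hBdiag i j (Ne.symm hj)]
      · simp
    have h := heq i
    rw [hxs, Matrix.mulVec_smul, hBy] at h
    simp only [Pi.smul_apply, smul_eq_mul] at h
    rw [h]
    ring
  -- the three scalar quantities
  set c : ℂ := ∑ i, (d i : ℂ) * (starRingEnd ℂ) (y i) * (A.map Complex.ofReal *ᵥ y) i with hcdef
  set pr : ℝ := ∑ i, d i * Complex.normSq (y i) with hprdef
  set qr : ℝ := ∑ i, d i * B i i * Complex.normSq (y i) with hqrdef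
  have hnsq : ∀ z : ℂ, ((Complex.normSq z : ℝ) : ℂ) = (starRingEnd ℂ) z * z := by
    intro z
    rw [Complex.normSq_eq_conj_mul_self]
  have hsum : lam ^ 2 * (pr : ℂ) = lam * c + (qr : ℂ) := by
    rw [hprdef, hqrdef, hcdef]
    push_cast
    rw [Finset.mul_sum, Finset.mul_sum, ← Finset.sum_add_distrib]
    refine Finset.sum_congr rfl fun i _ => ?_
    rw [hnsq (y i)]
    linear_combination (-(d i : ℂ) * (starRingEnd ℂ) (y i)) * (hmain i)
  have hpr : 0 < pr := by
    obtain ⟨i, hi⟩ := Function.ne_iff.mp hy0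
    refine Finset.sum_pos' (fun j _ => ?_) ⟨i, Finset.mem_univ i, ?_⟩
    · exact mul_nonneg (hd j).le (Complex.normSq_nonneg _)
    · exact mul_pos (hd i) (Complex.normSq_pos.mpr hi)
  have hqr : qr < 0 := by
    obtain ⟨i, hi⟩ := Function.ne_iff.mp hy0
    have : 0 < ∑ i, -(d i * B i i * Complex.normSq (y i)) := by
      refine Finset.sum_pos' (fun j _ => ?_) ⟨i, Finset.mem_univ i, ?_⟩
      · have : d j * B j j * Complex.normSq (y j) ≤ 0 :=
          mul_nonpos_of_nonpos_of_nonneg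
            (mul_nonpos_of_nonneg_of_nonpos (hd j).le (hBneg j).le)
            (Complex.normSq_nonneg _)
        linarith
      · have : d i * B i i * Complex.normSq (y i) < 0 :=
          mul_neg_of_neg_of_pos (mul_neg_of_pos_of_neg (hd i) (hBneg i))
            (Complex.normSq_pos.mpr hi)
        linarith
    rw [Finset.sum_neg_distrib] at this
    linarith
  -- c has negative real part
  have hcd : c = ∑ i, ∑ j, (d i : ℂ) * (A i j : ℂ) * ((starRingEnd ℂ) (y i) * y j) := by
    rw [hcdef]
    refine Finset.sum_congr rfl fun i _ => ?_
    rw [Matrix.mulVec, dotProduct, Finset.mul_sum]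
    refine Finset.sum_congr rfl fun j _ => ?_
    rw [Matrix.map_apply]
    ring
  have hcc : (starRingEnd ℂ) c
      = ∑ i, ∑ j, (d j : ℂ) * (A j i : ℂ) * ((starRingEnd ℂ) (y i) * y j) := by
    rw [hcd, map_sum, Finset.sum_comm]
    refine Finset.sum_congr rfl fun i _ => ?_
    rw [map_sum]
    refine Finset.sum_congr rfl fun j _ => ?_
    simp only [_root_.map_mul, Complex.conj_ofReal, Complex.conj_conj]
    ring
  have hsplit : ∑ i, ∑ j,
      (((-(Matrix.diagonal d * A + A.transpose * Matrix.diagonal d)) i j : ℝ) : ℂ)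
        * (starRingEnd ℂ) (y i) * y j = -(c + (starRingEnd ℂ) c) := by
    rw [hcc, hcd, ← Finset.sum_add_distrib, ← Finset.sum_neg_distrib]
    refine Finset.sum_congr rfl fun i _ => ?_
    rw [← Finset.sum_add_distrib, ← Finset.sum_neg_distrib]
    refine Finset.sum_congr rfl fun j _ => ?_
    simp only [Matrix.neg_apply, Matrix.add_apply, Matrix.diagonal_mul, Matrix.mul_diagonal,
      Matrix.transpose_apply]
    push_cast
    ring
  have hkey := key_pos hPD y hy0
  rw [hsplit] at hkey
  have hcre : c.re < 0 := by
    have h2 : (-(c + (starRingEnd ℂ) c)).re = -(2 * c.re) := by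
      simp [Complex.add_re, Complex.conj_re]
      ring
    rw [h2] at hkey
    linarith
  -- lam ≠ 0
  have hlam0 : lam ≠ 0 := by
    intro h
    rw [h] at hsum
    simp at hsum
    have : qr = 0 := by exact_mod_cast hsum.symm
    linarith
  have hnsqpos : 0 < Complex.normSq lam := Complex.normSq_pos.mpr hlam0
  -- solve for c
  have hc : c = lam * (pr : ℂ) - (qr : ℂ) * lam⁻¹ := by
    field_simp
    linear_combination -hsum
  have hcre2 : c.re = lam.re * pr - qr * lam.re / Complex.normSq lam := by
    rw [hc]
    simp [Complex.sub_re, Complex.mul_re, Complex.ofReal_re, Complex.ofReal_im,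
      Complex.inv_re, Complex.inv_im]
    ring
  by_contra hcon
  push_neg at hcon
  have h1 : 0 ≤ lam.re * pr := mul_nonneg hcon hpr.le
  have h2 : 0 ≤ -(qr * lam.re / Complex.normSq lam) := by
    rw [neg_nonneg]
    exact div_nonpos_of_nonpos_of_nonneg (mul_nonpos_of_nonpos_of_nonneg hqr.le hcon) hnsqpos.le
  linarith [hcre2 ▸ hcre]
end

section
/- Let A, B be real n×n upper triangular matrices and à = [[A,B],[I,O]] the corresponding 2n×2n block matrix. Then every eigenvalue of à has real part less than α if and only if for all i = 1,...,n: a_ii/2 < α and b_ii < α² − α·a_ii. -/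
open Matrix

lemma quad_root_iff (a b α : ℝ) :
    (∀ z : ℂ, z ^ 2 - (a : ℂ) * z - (b : ℂ) = 0 → z.re < α) ↔
      (a / 2 < α ∧ b < α ^ 2 - α * a) := by
  have key : ∀ r : ℝ, r ^ 2 - a * r - b = 0 →
      (∀ z : ℂ, z ^ 2 - (a : ℂ) * z - (b : ℂ) = 0 → z.re < α) → r < α := by
    intro r hr h
    have := h (r : ℂ) (by exact_mod_cast hr)
    simpa using this
  constructor
  · intro h
    rcases le_or_gt 0 (a ^ 2 + 4 * b) with hd | hd
    · set s := Real.sqrt (a ^ 2 + 4 * b) with hs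
      have hs0 : 0 ≤ s := Real.sqrt_nonneg _
      have hs2 : s ^ 2 = a ^ 2 + 4 * b := Real.sq_sqrt hd
      have hr1 : ((a + s) / 2 : ℝ) < α := key _ (by linear_combination (1/4) * hs2) h
      have hr2 : ((a - s) / 2 : ℝ) < α := key _ (by linear_combination (1/4) * hs2) h
      exact ⟨by nlinarith, by nlinarith⟩
    · set s := Real.sqrt (-(a ^ 2 + 4 * b)) with hs
      have hs2 : s ^ 2 = -(a ^ 2 + 4 * b) := Real.sq_sqrt (by linarith)
      have hsC : (s : ℂ) ^ 2 = -((a : ℂ) ^ 2 + 4 * (b : ℂ)) := by exact_mod_cast hs2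
      have hz := h (((a / 2 : ℝ) : ℂ) + ((s / 2 : ℝ) : ℂ) * Complex.I) (by
        push_cast
        linear_combination ((s : ℂ) ^ 2 / 4) * Complex.I_sq - (1/4 : ℂ) * hsC)
      simp at hz
      exact ⟨by linarith, by nlinarith [sq_nonneg (α - a / 2)]⟩
  · rintro ⟨h1, h2⟩ z hz
    have hre : z.re ^ 2 - z.im ^ 2 - a * z.re - b = 0 := by
      have := congrArg Complex.re hz
      simp [Complex.sub_re, Complex.mul_re, pow_two] at this
      nlinarith [this]
    have him : z.im * (2 * z.re - a) = 0 := by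
      have := congrArg Complex.im hz
      simp [Complex.sub_im, Complex.mul_im, pow_two] at this
      nlinarith [this]
    rcases mul_eq_zero.1 him with h0 | h0
    · by_contra hc
      push_neg at hc
      nlinarith [hre, h0]
    · nlinarith [h0]

lemma spec_char {n : ℕ} (A B : Matrix (Fin n) (Fin n) ℝ)
    (hA : A.BlockTriangular id) (hB : B.BlockTriangular id) (lam : ℂ) :
    lam ∈ spectrum ℂ ((Matrix.fromBlocks A B (1 : Matrix (Fin n) (Fin n) ℝ)
        (0 : Matrix (Fin n) (Fin n) ℝ)).map (Complex.ofReal)) ↔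
    ∃ i, lam ^ 2 - (A i i : ℂ) * lam - (B i i : ℂ) = 0 := by
  set A' := A.map (Complex.ofReal) with hA'
  set B' := B.map (Complex.ofReal) with hB'
  have hA't : A'.BlockTriangular id := fun i j hij => by simp [hA', A.map_apply, hA hij]
  have hB't : B'.BlockTriangular id := fun i j hij => by simp [hB', B.map_apply, hB hij]
  have hmap : (Matrix.fromBlocks A B (1 : Matrix (Fin n) (Fin n) ℝ)
        (0 : Matrix (Fin n) (Fin n) ℝ)).map (Complex.ofReal)
      = Matrix.fromBlocks A' B' 1 0 := by
    rw [Matrix.fromBlocks_map]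
    congr 1 <;> simp [Matrix.map_one, Matrix.map_zero]
  rw [hmap, spectrum.mem_iff]
  have hblocks : (algebraMap ℂ (Matrix (Fin n ⊕ Fin n) (Fin n ⊕ Fin n) ℂ)) lam
      - fromBlocks A' B' 1 0
      = fromBlocks (lam • 1 - A') (-B') (-1) (lam • (1 : Matrix (Fin n) (Fin n) ℂ)) := by
    ext i j
    cases i <;> cases j <;>
      simp [Matrix.algebraMap_matrix_apply, Matrix.one_apply, Matrix.smul_apply] <;>
      aesop
  rw [hblocks, Matrix.isUnit_iff_isUnit_det, isUnit_iff_ne_zero, not_ne_iff]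
  rcases eq_or_ne lam 0 with rfl | hlam
  · have hfact : fromBlocks ((0:ℂ) • 1 - A') (-B') (-1) ((0:ℂ) • (1 : Matrix (Fin n) (Fin n) ℂ))
        = fromBlocks 0 (-1) (-1) 0 * fromBlocks 1 0 A' B' := by
      rw [Matrix.fromBlocks_multiply]
      simp
    set S : Matrix (Fin n ⊕ Fin n) (Fin n ⊕ Fin n) ℂ := fromBlocks 0 (-1) (-1) 0 with hSdef
    have hSS : S * S = 1 := by
      rw [hSdef, Matrix.fromBlocks_multiply]
      simp [Matrix.fromBlocks_one]
    have hS : IsUnit S.det := Matrix.isUnit_det_of_left_inverse hSS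
    rw [hfact, Matrix.det_mul, mul_eq_zero]
    have hdB : (fromBlocks (1 : Matrix (Fin n) (Fin n) ℂ) 0 A' B').det = B'.det := by
      rw [Matrix.det_fromBlocks_zero₁₂]; simp
    have hB'det : B'.det = ∏ i, (B i i : ℂ) := by
      have h1 : B'.det = ((B.det : ℝ) : ℂ) := (RingHom.map_det Complex.ofRealHom B).symm
      rw [h1, Matrix.det_of_upperTriangular hB]
      push_cast
      rfl
    rw [hdB, hB'det]
    rw [or_iff_right hS.ne_zero, Finset.prod_eq_zero_iff]
    constructor
    · rintro ⟨i, -, hi⟩; exact ⟨i, by simpa using hi⟩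
    · rintro ⟨i, hi⟩; exact ⟨i, Finset.mem_univ i, by simpa using hi⟩
  · haveI : Invertible (lam • (1 : Matrix (Fin n) (Fin n) ℂ)) :=
      Matrix.invertibleOfIsUnitDet _ (by
        simp [Matrix.det_smul, isUnit_iff_ne_zero, hlam])
    have hinv : ⅟(lam • (1 : Matrix (Fin n) (Fin n) ℂ)) = lam⁻¹ • 1 := by
      apply invOf_eq_right_inv
      rw [smul_mul_smul_comm]
      simp [mul_inv_cancel₀ hlam]
    rw [Matrix.det_fromBlocks₂₂, hinv, mul_eq_zero]
    have hdet1 : ((lam • (1 : Matrix (Fin n) (Fin n) ℂ)).det : ℂ) ≠ 0 := by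
      simp [Matrix.det_smul, hlam]
    rw [or_iff_right hdet1]
    have hM : (lam • 1 - A' - -B' * (lam⁻¹ • 1) * (-1) :
        Matrix (Fin n) (Fin n) ℂ) = lam • 1 - A' - lam⁻¹ • B' := by
      simp [Matrix.neg_mul, Matrix.mul_neg, Matrix.mul_one, Matrix.mul_smul]
    rw [hM]
    have htri : (lam • 1 - A' - lam⁻¹ • B' : Matrix (Fin n) (Fin n) ℂ).BlockTriangular id := by
      intro i j hij
      have h1 : (1 : Matrix (Fin n) (Fin n) ℂ) i j = 0 :=
        Matrix.one_apply_ne (ne_of_lt hij).symm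
      simp [Matrix.sub_apply, Matrix.smul_apply, h1, hA't hij, hB't hij]
    rw [Matrix.det_of_upperTriangular htri, Finset.prod_eq_zero_iff]
    have hdiag : ∀ i, (lam • 1 - A' - lam⁻¹ • B' : Matrix (Fin n) (Fin n) ℂ) i i
        = lam - (A i i : ℂ) - lam⁻¹ * (B i i : ℂ) := by
      intro i
      simp [Matrix.sub_apply, Matrix.smul_apply, Matrix.one_apply_eq, hA', hB']
    constructor
    · rintro ⟨i, -, hi⟩
      rw [hdiag i] at hi
      refine ⟨i, ?_⟩
      have := congrArg (fun t => lam * t) hi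
      simp only [mul_zero] at this
      rw [← this]
      field_simp
    · rintro ⟨i, hi⟩
      refine ⟨i, Finset.mem_univ i, ?_⟩
      rw [hdiag i]
      have := congrArg (fun t => lam⁻¹ * t) hi
      simp only [mul_zero] at this
      rw [← this]
      field_simp

theorem triangular_second_order_shifted_stability {n : ℕ} (α : ℝ)
    (A B : Matrix (Fin n) (Fin n) ℝ)
    (hA : A.BlockTriangular id) (hB : B.BlockTriangular id) :
    (∀ lam ∈ spectrum ℂ ((Matrix.fromBlocks A B (1 : Matrix (Fin n) (Fin n) ℝ)
        (0 : Matrix (Fin n) (Fin n) ℝ)).map (Complex.ofReal)),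
        lam.re < α) ↔
      ∀ i, A i i / 2 < α ∧ B i i < α ^ 2 - α * A i i := by
  constructor
  · intro h i
    exact (quad_root_iff (A i i) (B i i) α).1
      (fun z hz => h z ((spec_char A B hA hB z).2 ⟨i, hz⟩))
  · intro h lam hlam
    obtain ⟨i, hi⟩ := (spec_char A B hA hB lam).1 hlam
    exact (quad_root_iff (A i i) (B i i) α).2 (h i) lam hi
end

section
/- Let α ∈ ℝ and let A, B be real n×n matrices with B diagonal. Suppose for all i: b_ii < −α² if α ≥ 0, and b_ii < 3α² − 2a_ii·α if α < 0; and suppose A satisfies a_ii < 2α and |a_ii − 2α| > Σ_{j≠i}|a_ij| for all i. Then α is not an eigenvalue of the block matrix à = [[A,B],[I,O]]. -/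
/-!
If `α` were an eigenvalue of `[[A, B], [I, 0]]` with eigenvector `(x, y)`, the second block row
would give `x = α y` and the first one `(α² I - α A - B) y = 0` with `y ≠ 0`. But the hypotheses
make `α² I - α A - B` strictly diagonally dominant: its off-diagonal row sums are
`|α| ∑_{j ≠ i} |a_ij| < |α| (2α - a_ii)`, which lies below the diagonal entry `α² - α a_ii - b_ii`.
By the Levy–Desplanques theorem that matrix is nonsingular. Since `α` is real, it suffices to
argue over `ℝ`.
-/

open Matrix

namespace Matrix

variable {n K L : Type*} [Fintype n] [DecidableEq n] [Field K] [Field L]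

theorem map_mem_spectrum_map_iff (f : K →+* L) (M : Matrix n n K) (c : K) :
    f c ∈ spectrum L (M.map f) ↔ c ∈ spectrum K M := by
  rw [mem_spectrum_iff_isRoot_charpoly, mem_spectrum_iff_isRoot_charpoly, charpoly_map,
    Polynomial.isRoot_map_iff f.injective]

theorem det_sq_smul_one_sub_smul_sub_eq_zero_of_mem_spectrum_fromBlocks {A B : Matrix n n K}
    {c : K} (hc : c ∈ spectrum K (fromBlocks A B (1 : Matrix n n K) 0)) :
    (c ^ 2 • 1 - c • A - B).det = 0 := by
  rw [mem_spectrum_iff_isRoot_charpoly, Polynomial.IsRoot, eval_charpoly,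
    ← exists_mulVec_eq_zero_iff] at hc
  obtain ⟨v, hv0, hv⟩ := hc
  obtain ⟨x, y, rfl⟩ : ∃ x y, v = Sum.elim x y := ⟨_, _, (Sum.elim_comp_inl_inr v).symm⟩
  rw [sub_mulVec, scalar_apply, diagonal_const_mulVec, fromBlocks_mulVec, sub_eq_zero] at hv
  have hx : c • y = x := by
    ext i; simpa using congrFun hv (Sum.inr i)
  have hxy : c • x = A *ᵥ x + B *ᵥ y := by
    ext i; simpa using congrFun hv (Sum.inl i)
  refine exists_mulVec_eq_zero_iff.mp ⟨y, fun hy => hv0 ?_, ?_⟩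
  · rw [← hx, hy, smul_zero, Sum.elim_zero_zero]
  · rw [sub_mulVec, sub_mulVec, smul_mulVec, smul_mulVec, one_mulVec, pow_two, mul_smul, hx, hxy,
      ← hx, mulVec_smul]
    abel

end Matrix

theorem abs_mul_two_mul_sub_lt {α a b : ℝ}
    (hb : (0 ≤ α → b < -α ^ 2) ∧ (α < 0 → b < 3 * α ^ 2 - 2 * a * α)) :
    |α| * (2 * α - a) < α ^ 2 - α * a - b := by
  rcases le_or_gt 0 α with hα | hα
  · rw [abs_of_nonneg hα]; linarith [hb.1 hα]
  · rw [abs_of_neg hα]; linarith [hb.2 hα]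

open Finset in
theorem det_sq_smul_one_sub_smul_sub_ne_zero {n : Type*} [Fintype n] [DecidableEq n] {α : ℝ}
    {A B : Matrix n n ℝ} (hBdiag : ∀ i j, i ≠ j → B i j = 0)
    (hdiag : ∀ i, |α| * (2 * α - A i i) < α ^ 2 - α * A i i - B i i)
    (hAneg : ∀ i, A i i < 2 * α)
    (hAdom : ∀ i, ∑ j ∈ univ.erase i, |A i j| < |A i i - 2 * α|) :
    (α ^ 2 • 1 - α • A - B).det ≠ 0 := by
  refine det_ne_zero_of_sum_row_lt_diag fun i => ?_
  have hoff : ∑ j ∈ univ.erase i, ‖(α ^ 2 • 1 - α • A - B) i j‖ =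
      |α| * ∑ j ∈ univ.erase i, |A i j| := by
    rw [mul_sum]
    refine sum_congr rfl fun j hj => ?_
    have hji : j ≠ i := ne_of_mem_erase hj
    simp [one_apply_ne hji.symm, hBdiag i j hji.symm]
  have hdom : ∑ j ∈ univ.erase i, |A i j| ≤ 2 * α - A i i := by
    simpa [abs_of_neg (sub_neg.2 (hAneg i))] using (hAdom i).le
  calc ∑ j ∈ univ.erase i, ‖(α ^ 2 • 1 - α • A - B) i j‖
      = |α| * ∑ j ∈ univ.erase i, |A i j| := hoff
    _ ≤ |α| * (2 * α - A i i) := mul_le_mul_of_nonneg_left hdom (abs_nonneg α)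
    _ < α ^ 2 - α * A i i - B i i := hdiag i
    _ ≤ ‖(α ^ 2 • 1 - α • A - B) i i‖ := by
      simp only [Matrix.sub_apply, Matrix.smul_apply, one_apply_eq, smul_eq_mul, mul_one,
        Real.norm_eq_abs]
      exact le_abs_self _

theorem alpha_not_eigenvalue {n : ℕ} (α : ℝ) (A B : Matrix (Fin n) (Fin n) ℝ)
    (hBdiag : ∀ i j, i ≠ j → B i j = 0)
    (hB : ∀ i, (0 ≤ α → B i i < -α ^ 2) ∧ (α < 0 → B i i < 3 * α ^ 2 - 2 * A i i * α))
    (hAneg : ∀ i, A i i < 2 * α)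
    (hAdom : ∀ i, ∑ j ∈ Finset.univ.erase i, |A i j| < |A i i - 2 * α|) :
    (α : ℂ) ∉ spectrum ℂ ((Matrix.fromBlocks A B (1 : Matrix (Fin n) (Fin n) ℝ)
        (0 : Matrix (Fin n) (Fin n) ℝ)).map (Complex.ofReal)) := by
  intro hαℂ
  have hα : α ∈ spectrum ℝ (fromBlocks A B 1 0) :=
    (map_mem_spectrum_map_iff Complex.ofRealHom _ α).mp hαℂ
  exact det_sq_smul_one_sub_smul_sub_ne_zero hBdiag (fun i => abs_mul_two_mul_sub_lt (hB i))
    hAneg hAdom (det_sq_smul_one_sub_smul_sub_eq_zero_of_mem_spectrum_fromBlocks hα)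
end

section
/- Let μ = a + ic and ν = b + id be complex numbers and α ∈ ℝ. Both roots of the quadratic λ² − μλ − ν = 0 have real part less than α if and only if 2α − a > 0 and (2α − a)²(α² − aα − b) + (2α − a)c(αc + d) − (αc + d)² > 0. -/
open Complex

lemma real_equiv (α x₁ x₂ y₁ y₂ : ℝ) :
    (x₁ < α ∧ x₂ < α) ↔
      (0 < 2 * α - (x₁ + x₂) ∧
        (2 * α - (x₁ + x₂)) ^ 2 * (α ^ 2 - (x₁ + x₂) * α - (y₁ * y₂ - x₁ * x₂)) +
          (2 * α - (x₁ + x₂)) * (y₁ + y₂) * (α * (y₁ + y₂) + (-(x₁ * y₂ + x₂ * y₁)))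
          - (α * (y₁ + y₂) + (-(x₁ * y₂ + x₂ * y₁))) ^ 2 > 0) := by
  have key : (2 * α - (x₁ + x₂)) ^ 2 * (α ^ 2 - (x₁ + x₂) * α - (y₁ * y₂ - x₁ * x₂)) +
          (2 * α - (x₁ + x₂)) * (y₁ + y₂) * (α * (y₁ + y₂) + (-(x₁ * y₂ + x₂ * y₁)))
          - (α * (y₁ + y₂) + (-(x₁ * y₂ + x₂ * y₁))) ^ 2
      = (α - x₁) * (α - x₂) * (((α - x₁) + (α - x₂)) ^ 2 + (y₁ - y₂) ^ 2) := by ring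
  rw [key]
  constructor
  · rintro ⟨h1, h2⟩
    have hu : 0 < α - x₁ := by linarith
    have hv : 0 < α - x₂ := by linarith
    exact ⟨by linarith, by positivity⟩
  · rintro ⟨h1, h2⟩
    have huv : 0 < (α - x₁) * (α - x₂) := by nlinarith [sq_nonneg (y₁ - y₂), sq_nonneg ((α - x₁) + (α - x₂))]
    constructor <;> nlinarith

theorem quadratic_roots_shifted_halfplane (α a b c d : ℝ) :
    (∀ z : ℂ, z ^ 2 - (a + c * Complex.I) * z - (b + d * Complex.I) = 0 → z.re < α) ↔
      (0 < 2 * α - a ∧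
        (2 * α - a) ^ 2 * (α ^ 2 - a * α - b) + (2 * α - a) * c * (α * c + d)
          - (α * c + d) ^ 2 > 0) := by
  set μ : ℂ := a + c * Complex.I with hμdef
  set ν : ℂ := b + d * Complex.I with hνdef
  obtain ⟨s, hs⟩ := IsAlgClosed.exists_pow_nat_eq (μ ^ 2 + 4 * ν) zero_lt_two
  set r₁ : ℂ := (μ + s) / 2 with hr1
  set r₂ : ℂ := (μ - s) / 2 with hr2
  have hfac : ∀ z : ℂ, z ^ 2 - μ * z - ν = (z - r₁) * (z - r₂) := by
    intro z
    rw [hr1, hr2]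
    linear_combination ((1:ℂ)/4) * hs
  have step1 : (∀ z : ℂ, z ^ 2 - μ * z - ν = 0 → z.re < α) ↔ (r₁.re < α ∧ r₂.re < α) := by
    constructor
    · intro h
      exact ⟨h r₁ (by rw [hfac]; ring), h r₂ (by rw [hfac]; ring)⟩
    · rintro ⟨h1, h2⟩ z hz
      rw [hfac] at hz
      rcases mul_eq_zero.mp hz with h | h
      · rw [sub_eq_zero.mp h]; exact h1
      · rw [sub_eq_zero.mp h]; exact h2
  rw [step1]
  have hsum : r₁ + r₂ = μ := by rw [hr1, hr2]; ring
  have hprod : r₁ * r₂ = -ν := by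
    rw [hr1, hr2]
    linear_combination (-(1:ℂ)/4) * hs
  have ha : a = r₁.re + r₂.re := by
    have := congrArg Complex.re hsum
    simp [hμdef] at this
    linarith
  have hc : c = r₁.im + r₂.im := by
    have := congrArg Complex.im hsum
    simp [hμdef] at this
    linarith
  have hb : b = r₁.im * r₂.im - r₁.re * r₂.re := by
    have := congrArg Complex.re hprod
    simp [hνdef, Complex.mul_re] at this
    linarith
  have hd : d = -(r₁.re * r₂.im + r₂.re * r₁.im) := by
    have := congrArg Complex.im hprod
    simp [hνdef, Complex.mul_im] at this
    linarith
  rw [ha, hb, hc, hd]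
  exact real_equiv α r₁.re r₂.re r₁.im r₂.im
end

section
/- Let μ = a + ic and ν = b + id be complex numbers. Both roots of λ² − μλ − ν = 0 have negative real part if and only if a < 0 and a²b + acd + d² < 0. -/
theorem quadratic_roots_stability (a b c d : ℝ) :
    (∀ z : ℂ, z ^ 2 - (a + c * Complex.I) * z - (b + d * Complex.I) = 0 → z.re < 0) ↔
      (a < 0 ∧ a ^ 2 * b + a * c * d + d ^ 2 < 0) := by
  have key : ∀ z w : ℂ, z + w = (a + c * Complex.I) →
      z * w = -(b + d * Complex.I) →
      (a = z.re + w.re ∧ c = z.im + w.im ∧ b = -(z.re * w.re - z.im * w.im)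
        ∧ d = -(z.re * w.im + z.im * w.re)) := by
    intro z w hsum hprod
    have h1 := congrArg Complex.re hsum
    have h2 := congrArg Complex.im hsum
    have h3 := congrArg Complex.re hprod
    have h4 := congrArg Complex.im hprod
    simp [Complex.add_re, Complex.add_im, Complex.mul_re, Complex.mul_im] at h1 h2 h3 h4
    exact ⟨h1.symm, h2.symm, by linarith, by linarith⟩
  constructor
  · intro h
    obtain ⟨s, hs⟩ := IsAlgClosed.exists_pow_nat_eq
      (((a : ℂ) + c * Complex.I) ^ 2 + 4 * ((b : ℂ) + d * Complex.I)) (n := 2) (by norm_num)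
    have hzr : (((a : ℂ) + c * Complex.I + s) / 2) ^ 2
        - ((a : ℂ) + c * Complex.I) * (((a : ℂ) + c * Complex.I + s) / 2)
        - ((b : ℂ) + d * Complex.I) = 0 := by
      linear_combination hs / 4
    have hwr : (((a : ℂ) + c * Complex.I - s) / 2) ^ 2
        - ((a : ℂ) + c * Complex.I) * (((a : ℂ) + c * Complex.I - s) / 2)
        - ((b : ℂ) + d * Complex.I) = 0 := by
      linear_combination hs / 4
    have hx1 := h _ hzr
    have hx2 := h _ hwr
    have hsum : ((a : ℂ) + c * Complex.I + s) / 2 + ((a : ℂ) + c * Complex.I - s) / 2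
        = (a : ℂ) + c * Complex.I := by ring
    have hprod : (((a : ℂ) + c * Complex.I + s) / 2) * (((a : ℂ) + c * Complex.I - s) / 2)
        = -((b : ℂ) + d * Complex.I) := by
      linear_combination -hs / 4
    obtain ⟨ha, hc, hb, hd⟩ := key _ _ hsum hprod
    set x1 := ((((a : ℂ) + c * Complex.I + s) / 2)).re
    set y1 := ((((a : ℂ) + c * Complex.I + s) / 2)).im
    set x2 := ((((a : ℂ) + c * Complex.I - s) / 2)).re
    set y2 := ((((a : ℂ) + c * Complex.I - s) / 2)).im
    refine ⟨by linarith, ?_⟩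
    have hfac : a ^ 2 * b + a * c * d + d ^ 2 =
        -(x1 * x2) * ((x1 + x2) ^ 2 + (y1 - y2) ^ 2) := by
      rw [ha, hb, hc, hd]; ring
    rw [hfac]
    have hpp : 0 < x1 * x2 := mul_pos_of_neg_of_neg hx1 hx2
    have hP : 0 < (x1 + x2) ^ 2 + (y1 - y2) ^ 2 := by
      nlinarith [sq_nonneg (y1 - y2)]
    nlinarith [mul_pos hpp hP]
  · rintro ⟨ha, hΔ⟩ z hz
    have hsum : z + ((a : ℂ) + c * Complex.I - z) = (a : ℂ) + c * Complex.I := by ring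
    have hprod : z * ((a : ℂ) + c * Complex.I - z) = -((b : ℂ) + d * Complex.I) := by
      linear_combination -hz
    obtain ⟨ha', hc', hb', hd'⟩ := key _ _ hsum hprod
    set x1 := z.re
    set y1 := z.im
    set x2 := ((a : ℂ) + c * Complex.I - z).re
    set y2 := ((a : ℂ) + c * Complex.I - z).im
    have hfac : a ^ 2 * b + a * c * d + d ^ 2 =
        -(x1 * x2) * ((x1 + x2) ^ 2 + (y1 - y2) ^ 2) := by
      rw [ha', hb', hc', hd']; ring
    rw [hfac] at hΔ
    have hsumre : x1 + x2 < 0 := by linarith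
    by_contra hge
    push_neg at hge
    have hx2 : x2 < 0 := by linarith
    have hP : (0:ℝ) ≤ (x1 + x2) ^ 2 + (y1 - y2) ^ 2 := by positivity
    nlinarith [mul_nonneg (mul_nonneg hge (neg_nonneg.mpr hx2.le)) hP]
end

section
/- Let a < 0 be real and B a real n×n matrix, and let à = [[aI, B],[I, O]] be the 2n×2n block matrix. Then à is Hurwitz stable if and only if every eigenvalue ν = b + id of B satisfies b < 0 and a²b + d² < 0 (equivalently |a| > |d|/√(−b)); i.e., all eigenvalues of B lie inside the parabola {x + iy : y² < −a²x}. -/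
open Matrix

lemma algmap_mulVec {m : Type*} [Fintype m] [DecidableEq m] (μ : ℂ) (v : m → ℂ) :
    (algebraMap ℂ (Matrix m m ℂ) μ) *ᵥ v = μ • v := by
  ext i
  simp [Matrix.algebraMap_eq_diagonal, Matrix.mulVec_diagonal]

lemma mem_spectrum_iff_eigen {m : Type*} [Fintype m] [DecidableEq m]
    (M : Matrix m m ℂ) (μ : ℂ) :
    μ ∈ spectrum ℂ M ↔ ∃ v : m → ℂ, v ≠ 0 ∧ M *ᵥ v = μ • v := by
  rw [spectrum.mem_iff, Matrix.isUnit_iff_isUnit_det, isUnit_iff_ne_zero, not_not,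
    ← Matrix.exists_mulVec_eq_zero_iff]
  constructor
  · rintro ⟨v, hv, h⟩
    refine ⟨v, hv, ?_⟩
    rw [Matrix.sub_mulVec, algmap_mulVec, sub_eq_zero] at h
    exact h.symm
  · rintro ⟨v, hv, h⟩
    exact ⟨v, hv, by rw [Matrix.sub_mulVec, algmap_mulVec, h, sub_self]⟩

lemma block_spectrum {n : ℕ} (a : ℝ) (B : Matrix (Fin n) (Fin n) ℝ) (lam : ℂ) :
    lam ∈ spectrum ℂ ((Matrix.fromBlocks (a • (1 : Matrix (Fin n) (Fin n) ℝ)) B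
        (1 : Matrix (Fin n) (Fin n) ℝ) (0 : Matrix (Fin n) (Fin n) ℝ)).map
        (Complex.ofReal)) ↔ (lam ^ 2 - (a : ℂ) * lam) ∈ spectrum ℂ (B.map Complex.ofReal) := by
  have e1 : ((a • (1 : Matrix (Fin n) (Fin n) ℝ))).map Complex.ofReal
      = (a : ℂ) • (1 : Matrix (Fin n) (Fin n) ℂ) := by
    ext i j
    simp [Matrix.map_apply, Matrix.one_apply, apply_ite Complex.ofReal]
  have e2 : ((1 : Matrix (Fin n) (Fin n) ℝ)).map Complex.ofReal
      = (1 : Matrix (Fin n) (Fin n) ℂ) := by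
    ext i j
    simp [Matrix.map_apply, Matrix.one_apply, apply_ite Complex.ofReal]
  have e3 : ((0 : Matrix (Fin n) (Fin n) ℝ)).map Complex.ofReal
      = (0 : Matrix (Fin n) (Fin n) ℂ) := by
    ext i j; simp [Matrix.map_apply]
  have hmap : ((Matrix.fromBlocks (a • (1 : Matrix (Fin n) (Fin n) ℝ)) B
        (1 : Matrix (Fin n) (Fin n) ℝ) (0 : Matrix (Fin n) (Fin n) ℝ)).map Complex.ofReal)
      = Matrix.fromBlocks ((a : ℂ) • (1 : Matrix (Fin n) (Fin n) ℂ)) (B.map Complex.ofReal)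
        (1 : Matrix (Fin n) (Fin n) ℂ) (0 : Matrix (Fin n) (Fin n) ℂ) := by
    rw [Matrix.fromBlocks_map, e1, e2, e3]
  rw [hmap, mem_spectrum_iff_eigen, mem_spectrum_iff_eigen]
  constructor
  · rintro ⟨v, hv, h⟩
    rw [Matrix.fromBlocks_mulVec] at h
    set v₁ := v ∘ Sum.inl with hv1
    set v₂ := v ∘ Sum.inr with hv2
    have htop : ((a : ℂ) • (1 : Matrix (Fin n) (Fin n) ℂ)) *ᵥ v₁
        + B.map Complex.ofReal *ᵥ v₂ = lam • v₁ :=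
      funext fun i => congrFun h (Sum.inl i)
    have hbot' : (1 : Matrix (Fin n) (Fin n) ℂ) *ᵥ v₁
        + (0 : Matrix (Fin n) (Fin n) ℂ) *ᵥ v₂ = lam • v₂ :=
      funext fun i => congrFun h (Sum.inr i)
    rw [Matrix.one_mulVec, Matrix.zero_mulVec, add_zero] at hbot'
    rw [Matrix.smul_mulVec, Matrix.one_mulVec, hbot'] at htop
    have hv₂ : v₂ ≠ 0 := by
      intro h0
      apply hv
      have h1 : v₁ = 0 := by rw [hbot', h0, smul_zero]
      funext i
      cases i with
      | inl i => exact congrFun h1 i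
      | inr i => exact congrFun h0 i
    refine ⟨v₂, hv₂, ?_⟩
    have : B.map Complex.ofReal *ᵥ v₂ = lam • lam • v₂ - (a : ℂ) • lam • v₂ := by
      rw [← htop]; module
    rw [this]; module
  · rintro ⟨w, hw, hBw⟩
    refine ⟨Sum.elim (lam • w) w, ?_, ?_⟩
    · intro h0
      exact hw (funext fun i => congrFun h0 (Sum.inr i))
    · rw [Matrix.fromBlocks_mulVec, Sum.elim_comp_inl, Sum.elim_comp_inr,
        Matrix.smul_mulVec, Matrix.one_mulVec,
        Matrix.zero_mulVec, add_zero, hBw]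
      have htopv : (a : ℂ) • lam • w + (lam ^ 2 - (a : ℂ) * lam) • w = lam • lam • w := by
        module
      rw [htopv]
      funext i
      cases i <;> simp

theorem scalar_damping_parabola {n : ℕ} (a : ℝ) (ha : a < 0)
    (B : Matrix (Fin n) (Fin n) ℝ) :
    (∀ lam ∈ spectrum ℂ ((Matrix.fromBlocks (a • (1 : Matrix (Fin n) (Fin n) ℝ)) B
        (1 : Matrix (Fin n) (Fin n) ℝ) (0 : Matrix (Fin n) (Fin n) ℝ)).map
        (Complex.ofReal)), lam.re < 0) ↔
      ∀ ν ∈ spectrum ℂ (B.map (Complex.ofReal)),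
        ν.re < 0 ∧ a ^ 2 * ν.re + ν.im ^ 2 < 0 := by
  constructor
  · intro H ν hν
    obtain ⟨z, hz⟩ : ∃ z : ℂ, z ^ 2 = (a / 2 : ℂ) ^ 2 + ν := by
      obtain ⟨z, hz⟩ := IsAlgClosed.exists_pow_nat_eq ((a / 2 : ℂ) ^ 2 + ν) (by norm_num : (0:ℕ) < 2)
      exact ⟨z, hz⟩
    set lam := (a / 2 : ℂ) + z with hlam
    have hroot : lam ^ 2 - (a : ℂ) * lam = ν := by
      have : ((a : ℝ) / 2 : ℂ) = (a : ℂ) / 2 := by push_cast; ring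
      rw [hlam]; rw [show ((a : ℂ) / 2 + z) ^ 2 - (a:ℂ) * ((a:ℂ)/2 + z)
        = z ^ 2 - ((a:ℂ)/2) ^ 2 by ring, hz]; push_cast; ring
    have hroot2 : ((a : ℂ) - lam) ^ 2 - (a : ℂ) * ((a : ℂ) - lam) = ν := by
      rw [← hroot]; ring
    have h1 : lam.re < 0 := H lam ((block_spectrum a B lam).2 (hroot ▸ hν))
    have h2 : ((a : ℂ) - lam).re < 0 :=
      H _ ((block_spectrum a B _).2 (hroot2 ▸ hν))
    set x := lam.re with hx
    set y := lam.im with hy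
    have h2' : a - x < 0 := by
      simpa [Complex.sub_re] using h2
    have hb : ν.re = x ^ 2 - y ^ 2 - a * x := by
      rw [← hroot]; simp [pow_two, Complex.mul_re, Complex.sub_re, Complex.mul_im]; rw [← hx, ← hy]
    have hd : ν.im = 2 * x * y - a * y := by
      rw [← hroot]; simp [pow_two, Complex.mul_im, Complex.sub_im, Complex.mul_re]; rw [← hx, ← hy]; ring
    constructor
    · nlinarith [sq_nonneg y]
    · have key : a ^ 2 * ν.re + ν.im ^ 2 = x * (x - a) * (a ^ 2 + 4 * y ^ 2) := by
        rw [hb, hd]; ring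
      rw [key]
      have hxa : (0:ℝ) < x - a := by linarith
      have : x * (x - a) < 0 := mul_neg_of_neg_of_pos h1 hxa
      have hpos : (0:ℝ) < a ^ 2 + 4 * y ^ 2 := by nlinarith [sq_nonneg y, mul_pos_of_neg_of_neg ha ha]
      exact mul_neg_of_neg_of_pos this hpos
  · intro H lam hlam
    obtain ⟨_, h2⟩ := H _ ((block_spectrum a B lam).1 hlam)
    set x := lam.re with hx
    set y := lam.im with hy
    have hb : (lam ^ 2 - (a:ℂ) * lam).re = x ^ 2 - y ^ 2 - a * x := by
      simp [pow_two, Complex.mul_re, Complex.sub_re, Complex.mul_im]; rw [← hx, ← hy]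
    have hd : (lam ^ 2 - (a:ℂ) * lam).im = 2 * x * y - a * y := by
      simp [pow_two, Complex.mul_im, Complex.sub_im, Complex.mul_re]; rw [← hx, ← hy]; ring
    rw [hb, hd] at h2
    have key : a ^ 2 * (x ^ 2 - y ^ 2 - a * x) + (2 * x * y - a * y) ^ 2
        = x * (x - a) * (a ^ 2 + 4 * y ^ 2) := by ring
    rw [key] at h2
    have hpos : (0:ℝ) < a ^ 2 + 4 * y ^ 2 := by nlinarith [sq_nonneg y, mul_pos_of_neg_of_neg ha ha]
    have hxxa : x * (x - a) < 0 := by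
      by_contra hcon
      push_neg at hcon
      nlinarith
    nlinarith
end

section
/- Let A be a 2k×2k real matrix in block form [[A₁₁, A₁₂],[A₂₁, A₂₂]] with A₁₂ invertible. Then λ is an eigenvalue of A if and only if det(λ²I − Âλ − B̂) = 0, where = A₁₂⁻¹A₁₁A₁₂ + A₂₂ and B̂ = A₂₁A₁₂ − A₂₂A₁₂⁻¹A₁₁A₁₂. -/
open Matrix

theorem block_eigenvalue_quadratic {k : ℕ}
    (A₁₁ A₁₂ A₂₁ A₂₂ : Matrix (Fin k) (Fin k) ℝ) (h12 : IsUnit A₁₂.det) (lam : ℂ) :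
    lam ∈ spectrum ℂ ((Matrix.fromBlocks A₁₁ A₁₂ A₂₁ A₂₂).map (Complex.ofReal)) ↔
      (lam ^ 2 • (1 : Matrix (Fin k) (Fin k) ℂ)
        - lam • ((A₁₂⁻¹ * A₁₁ * A₁₂ + A₂₂).map (Complex.ofReal))
        - ((A₂₁ * A₁₂ - A₂₂ * A₁₂⁻¹ * A₁₁ * A₁₂).map (Complex.ofReal))).det = 0 := by
  classical
  set f : ℝ →+* ℂ := Complex.ofRealHom with hf
  have hfc : (Complex.ofReal : ℝ → ℂ) = ⇑f := rfl
  set B11 := A₁₁.map ⇑f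
  set B12 := A₁₂.map ⇑f
  set B21 := A₂₁.map ⇑f
  set B22 := A₂₂.map ⇑f
  set N := (A₁₂⁻¹).map ⇑f with hN
  have hBN : B12 * N = 1 := by
    rw [← Matrix.map_mul, Matrix.mul_nonsing_inv _ h12, Matrix.map_one f f.map_zero f.map_one]
  have hNB : N * B12 = 1 := by
    rw [← Matrix.map_mul, Matrix.nonsing_inv_mul _ h12, Matrix.map_one f f.map_zero f.map_one]
  haveI : Invertible B12 := ⟨N, hNB, hBN⟩
  have hinvN : ⅟B12 = N := invOf_eq_right_inv hBN
  -- rewrite spectrum membership as determinant vanishing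
  rw [spectrum.mem_iff, Matrix.isUnit_iff_isUnit_det, isUnit_iff_ne_zero, not_not,
    Algebra.algebraMap_eq_smul_one]
  have hM : (Matrix.fromBlocks A₁₁ A₁₂ A₂₁ A₂₂).map (Complex.ofReal)
      = Matrix.fromBlocks B11 B12 B21 B22 := by
    rw [hfc, Matrix.fromBlocks_map]
  rw [hM]
  have hX : lam • (1 : Matrix (Fin k ⊕ Fin k) (Fin k ⊕ Fin k) ℂ)
      - Matrix.fromBlocks B11 B12 B21 B22
      = Matrix.fromBlocks (lam • 1 - B11) (-B12) (-B21) (lam • 1 - B22) := by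
    rw [← Matrix.fromBlocks_one, Matrix.fromBlocks_smul, sub_eq_add_neg,
      Matrix.fromBlocks_neg, Matrix.fromBlocks_add]
    simp [sub_eq_add_neg]
  rw [hX]
  set J : Matrix (Fin k ⊕ Fin k) (Fin k ⊕ Fin k) ℂ := Matrix.fromBlocks 0 1 1 0 with hJ
  have hJJ : J * J = 1 := by
    rw [hJ, Matrix.fromBlocks_multiply]
    simp
  have hJunit : IsUnit J.det := by
    apply IsUnit.of_mul_eq_one
    rw [← Matrix.det_mul, hJJ, Matrix.det_one]
  have step1 : (Matrix.fromBlocks (lam • 1 - B11) (-B12) (-B21) (lam • (1:Matrix (Fin k) (Fin k) ℂ) - B22)).det = 0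
      ↔ (Matrix.fromBlocks (-B12) (lam • 1 - B11) (lam • 1 - B22) (-B21)).det = 0 := by
    constructor
    · intro h
      have : (Matrix.fromBlocks (lam • 1 - B11) (-B12) (-B21) (lam • 1 - B22) * J).det = 0 := by
        rw [Matrix.det_mul, h, zero_mul]
      rw [hJ, Matrix.fromBlocks_multiply] at this
      simpa using this
      
    · intro h
      have h' : (Matrix.fromBlocks (lam • 1 - B11) (-B12) (-B21) (lam • 1 - B22) * J).det = 0 := by
        rw [hJ, Matrix.fromBlocks_multiply]
        simpa using h
      rw [Matrix.det_mul] at h'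
      rcases mul_eq_zero.mp h' with h0 | h0
      · exact h0
      · exact absurd h0 hJunit.ne_zero
  rw [step1]
  haveI : Invertible (-B12) := invertibleNeg B12
  rw [Matrix.det_fromBlocks₁₁]
  have hdetneg : IsUnit (-B12).det := Matrix.isUnit_det_of_invertible _
  rw [mul_eq_zero, or_iff_right hdetneg.ne_zero]
  have hinvneg : ⅟(-B12) = -N := by rw [invOf_neg, hinvN]
  rw [hinvneg]
  set Y : Matrix (Fin k) (Fin k) ℂ := -B21 - (lam • 1 - B22) * -N * (lam • 1 - B11) with hY
  have hB12unit : IsUnit B12.det := Matrix.isUnit_det_of_invertible _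
  have step2 : Y.det = 0 ↔ (Y * B12).det = 0 := by
    rw [Matrix.det_mul, mul_eq_zero, or_iff_left hB12unit.ne_zero]
  rw [step2]
  have key : Y * B12 = lam ^ 2 • (1 : Matrix (Fin k) (Fin k) ℂ)
      - lam • (N * B11 * B12 + B22)
      - (B21 * B12 - B22 * N * B11 * B12) := by
    rw [hY]
    have h2 : lam ^ 2 = lam * lam := sq lam
    simp only [sub_mul, mul_sub, neg_mul, mul_neg, neg_neg, Matrix.smul_mul, Matrix.mul_smul,
      mul_one, Matrix.one_mul, Matrix.mul_one, h2, smul_smul, smul_add, smul_sub, mul_assoc, hNB]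
    abel_nf
  rw [key]
  have hmap1 : (A₁₂⁻¹ * A₁₁ * A₁₂ + A₂₂).map (Complex.ofReal) = N * B11 * B12 + B22 := by
    rw [hfc]
    simp [Matrix.map_add, Matrix.map_mul, N, B11, B12, B22]
  have hmap2 : (A₂₁ * A₁₂ - A₂₂ * A₁₂⁻¹ * A₁₁ * A₁₂).map (Complex.ofReal)
      = B21 * B12 - B22 * N * B11 * B12 := by
    rw [hfc]
    simp [Matrix.map_sub, Matrix.map_mul, N, B11, B12, B21, B22]
  rw [hmap1, hmap2]
end

section
/- Let n = 2k, θ ∈ (0, π/4], and let A be an n×n real matrix in block form [[A₁₁, A₁₂],[A₂₁, A₂₂]] with A₁₂ invertible. Set = A₁₂⁻¹A₁₁A₁₂ + A₂₂ and B̂ = A₂₁A₁₂ − A₂₂A₁₂⁻¹A₁₁A₁₂. If satisfies â_ii < 0 and cos(θ)|â_ii| > Σ_{j≠i}|â_ij| for all i, and B̂ satisfies b̂_ii < 0 and |b̂_ii| > Σ_{j≠i}|b̂_ij| for all i, then every eigenvalue λ of A satisfies |arg(λ)| > θ. -/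
/-!
An eigenvector `(v₁, v₂)` of the block matrix for `λ` yields `u = A₁₂⁻¹ v₁ ≠ 0` with
`(λ² I - λ Â - B̂) u = 0`, so `det (λ² I - λ Â - B̂) = 0`. If `|arg λ| ≤ θ ≤ π / 4`, then
`Re λ ≥ |λ| cos θ` and `Re λ² ≥ 0`, so for `â_ii, b̂_ii ≤ 0` the diagonal entry
`λ² - â_ii λ - b̂_ii` has modulus at least `|λ| cos θ |â_ii| + |b̂_ii|`. The two dominance
hypotheses make this exceed the off-diagonal row sum `Σ_{j ≠ i} (|λ| |â_ij| + |b̂_ij|)`, so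
`λ² I - λ Â - B̂` is strictly diagonally dominant and, by the Levy–Desplanques theorem,
nonsingular: a contradiction.
-/

open Finset Matrix Real

namespace Complex

theorem norm_mul_cos_le_re {z : ℂ} {θ : ℝ} (hz : |z.arg| ≤ θ) (hθ : θ ≤ π) :
    ‖z‖ * Real.cos θ ≤ z.re := by
  rw [← norm_mul_cos_arg z, ← Real.cos_abs z.arg]
  exact mul_le_mul_of_nonneg_left (Real.cos_le_cos_of_nonneg_of_le_pi (abs_nonneg _) hθ hz)
    (norm_nonneg z)

theorem sq_im_le_sq_re_of_abs_arg_le {z : ℂ} (hz : |z.arg| ≤ π / 4) : z.im ^ 2 ≤ z.re ^ 2 := by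
  have h := norm_mul_cos_le_re hz (by linarith [pi_pos])
  rw [cos_pi_div_four] at h
  have hsq := pow_le_pow_left₀ (by positivity) h 2
  rw [mul_pow, div_pow, sq_sqrt zero_le_two] at hsq
  rw [← sq_norm_sub_sq_re]
  linarith

theorem le_norm_sq_sub_mul_sub_of_abs_arg_le {z : ℂ} {θ a b : ℝ} (hz : |z.arg| ≤ θ)
    (hθ : θ ≤ π / 4) (ha : a ≤ 0) (hb : b ≤ 0) :
    ‖z‖ * Real.cos θ * |a| + |b| ≤ ‖z ^ 2 - a * z - b‖ := by
  have hre := mul_le_mul_of_nonneg_left (norm_mul_cos_le_re hz (by linarith [pi_pos]))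
    (neg_nonneg.2 ha)
  have him := sq_im_le_sq_re_of_abs_arg_le (hz.trans hθ)
  calc ‖z‖ * Real.cos θ * |a| + |b| ≤ (z ^ 2 - a * z - b).re := by
        rw [abs_of_nonpos ha, abs_of_nonpos hb]
        simp only [sub_re, pow_two, mul_re, ofReal_re, ofReal_im]
        nlinarith
    _ ≤ ‖z ^ 2 - a * z - b‖ := re_le_norm _

end Complex

namespace Matrix

variable {n : Type*} [Fintype n] [DecidableEq n] {K : Type*} [Field K]

theorem map_nonsing_inv {R S : Type*} [CommRing R] [CommRing S] (f : R →+* S)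
    {A : Matrix n n R} (hA : IsUnit A.det) : A⁻¹.map f = (A.map f)⁻¹ := by
  refine (inv_eq_left_inv ?_).symm
  rw [← Matrix.map_mul, nonsing_inv_mul _ hA, Matrix.map_one _ f.map_zero f.map_one]

theorem exists_mulVec_eq_smul_of_mem_spectrum {M : Matrix n n K} {μ : K}
    (hμ : μ ∈ spectrum K M) : ∃ v ≠ 0, M *ᵥ v = μ • v := by
  rw [mem_spectrum_iff_isRoot_charpoly, Polynomial.IsRoot.def, eval_charpoly] at hμ
  obtain ⟨v, hv, hMv⟩ := exists_mulVec_eq_zero_iff.2 hμ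
  refine ⟨v, hv, ?_⟩
  rw [sub_mulVec, scalar_apply, ← smul_one_eq_diagonal, smul_mulVec, one_mulVec,
    sub_eq_zero] at hMv
  exact hMv.symm

theorem exists_mulVec_eq_zero_of_fromBlocks_mulVec_eq_smul {A₁₁ A₁₂ A₂₁ A₂₂ : Matrix n n K}
    (h₁₂ : IsUnit A₁₂.det) {μ : K} {v : n ⊕ n → K} (hv : v ≠ 0)
    (hμ : fromBlocks A₁₁ A₁₂ A₂₁ A₂₂ *ᵥ v = μ • v) :
    ∃ u ≠ 0, (μ ^ 2 • 1 - μ • (A₁₂⁻¹ * A₁₁ * A₁₂ + A₂₂)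
      - (A₂₁ * A₁₂ - A₂₂ * A₁₂⁻¹ * A₁₁ * A₁₂)) *ᵥ u = 0 := by
  set v₁ := v ∘ Sum.inl
  set v₂ := v ∘ Sum.inr
  rw [fromBlocks_mulVec] at hμ
  have hrow₁ : A₁₁ *ᵥ v₁ + A₁₂ *ᵥ v₂ = μ • v₁ := funext fun i => congrFun hμ (Sum.inl i)
  have hrow₂ : A₂₁ *ᵥ v₁ + A₂₂ *ᵥ v₂ = μ • v₂ := funext fun i => congrFun hμ (Sum.inr i)
  set u := A₁₂⁻¹ *ᵥ v₁
  have hv₁ : v₁ = A₁₂ *ᵥ u := by rw [mulVec_mulVec, mul_nonsing_inv _ h₁₂, one_mulVec]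
  have hv₂ : v₂ = μ • u - A₁₂⁻¹ *ᵥ A₁₁ *ᵥ A₁₂ *ᵥ u := by
    have := congrArg (A₁₂⁻¹ *ᵥ ·) hrow₁
    simp only [mulVec_add, mulVec_smul, mulVec_mulVec, nonsing_inv_mul _ h₁₂, one_mulVec] at this
    rw [← hv₁, mulVec_mulVec]
    exact eq_sub_of_add_eq' this
  refine ⟨u, fun hu => hv ?_, ?_⟩
  · ext (i | i)
    · show v₁ i = 0
      simpa [hu] using congrFun hv₁ i
    · show v₂ i = 0
      simpa [hu] using congrFun hv₂ i
  · rw [← sub_eq_zero.2 hrow₂.symm, hv₁, hv₂]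
    simp only [sub_mulVec, add_mulVec, smul_mulVec, one_mulVec, mulVec_sub, mulVec_smul,
      ← mulVec_mulVec]
    module

theorem det_eq_zero_of_mem_spectrum_fromBlocks {A₁₁ A₁₂ A₂₁ A₂₂ : Matrix n n K}
    (h₁₂ : IsUnit A₁₂.det) {μ : K} (hμ : μ ∈ spectrum K (fromBlocks A₁₁ A₁₂ A₂₁ A₂₂)) :
    (μ ^ 2 • 1 - μ • (A₁₂⁻¹ * A₁₁ * A₁₂ + A₂₂)
      - (A₂₁ * A₁₂ - A₂₂ * A₁₂⁻¹ * A₁₁ * A₁₂)).det = 0 := by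
  obtain ⟨v, hv, hμv⟩ := exists_mulVec_eq_smul_of_mem_spectrum hμ
  exact exists_mulVec_eq_zero_iff.1
    (exists_mulVec_eq_zero_of_fromBlocks_mulVec_eq_smul h₁₂ hv hμv)

theorem det_sq_smul_one_sub_smul_sub_ne_zero {θ : ℝ} (hθ : θ ≤ π / 4) {A B : Matrix n n ℝ}
    (hAneg : ∀ i, A i i ≤ 0) (hAdom : ∀ i, ∑ j ∈ univ.erase i, |A i j| ≤ Real.cos θ * |A i i|)
    (hBneg : ∀ i, B i i ≤ 0) (hBdom : ∀ i, ∑ j ∈ univ.erase i, |B i j| < |B i i|)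
    {z : ℂ} (hz : |z.arg| ≤ θ) :
    (z ^ 2 • 1 - z • A.map Complex.ofReal - B.map Complex.ofReal).det ≠ 0 := by
  refine det_ne_zero_of_sum_row_lt_diag fun i => ?_
  set M := z ^ 2 • 1 - z • A.map Complex.ofReal - B.map Complex.ofReal with hM
  have hentry : ∀ j, M i j = z ^ 2 * (1 : Matrix n n ℂ) i j - A i j * z - B i j := fun j => by
    simp [hM, mul_comm z]
  calc ∑ j ∈ univ.erase i, ‖M i j‖
      ≤ ∑ j ∈ univ.erase i, (‖z‖ * |A i j| + |B i j|) := by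
        refine sum_le_sum fun j hj => ?_
        rw [hentry, one_apply_ne (ne_of_mem_erase hj).symm, mul_zero, zero_sub]
        refine (norm_sub_le _ _).trans_eq ?_
        rw [norm_neg, norm_mul, Complex.norm_real, Complex.norm_real, Real.norm_eq_abs,
          Real.norm_eq_abs, mul_comm]
    _ = ‖z‖ * ∑ j ∈ univ.erase i, |A i j| + ∑ j ∈ univ.erase i, |B i j| := by
        rw [sum_add_distrib, mul_sum]
    _ < ‖z‖ * Real.cos θ * |A i i| + |B i i| := by
        rw [mul_assoc]
        exact add_lt_add_of_le_of_lt (mul_le_mul_of_nonneg_left (hAdom i) (norm_nonneg z))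
          (hBdom i)
    _ ≤ ‖M i i‖ := by
        rw [hentry, one_apply_eq, mul_one]
        exact Complex.le_norm_sq_sub_mul_sub_of_abs_arg_le hz hθ (hAneg i) (hBneg i)

end Matrix

theorem fractional_order_sector {k : ℕ} (θ : ℝ) (hθ : 0 < θ ∧ θ ≤ Real.pi / 4)
    (A₁₁ A₁₂ A₂₁ A₂₂ : Matrix (Fin k) (Fin k) ℝ) (h12 : IsUnit A₁₂.det)
    (Ahat Bhat : Matrix (Fin k) (Fin k) ℝ)
    (hAhat : Ahat = A₁₂⁻¹ * A₁₁ * A₁₂ + A₂₂)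
    (hBhat : Bhat = A₂₁ * A₁₂ - A₂₂ * A₁₂⁻¹ * A₁₁ * A₁₂)
    (hAneg : ∀ i, Ahat i i < 0)
    (hAdom : ∀ i, ∑ j ∈ Finset.univ.erase i, |Ahat i j| < Real.cos θ * |Ahat i i|)
    (hBneg : ∀ i, Bhat i i < 0)
    (hBdom : ∀ i, ∑ j ∈ Finset.univ.erase i, |Bhat i j| < |Bhat i i|) :
    ∀ lam ∈ spectrum ℂ ((Matrix.fromBlocks A₁₁ A₁₂ A₂₁ A₂₂).map (Complex.ofReal)),
      θ < |lam.arg| := by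
  intro lam hlam
  by_contra! hle
  have hinv : A₁₂⁻¹.map Complex.ofReal = (A₁₂.map Complex.ofReal)⁻¹ :=
    map_nonsing_inv Complex.ofRealHom h12
  have hAmap : Ahat.map Complex.ofReal = (A₁₂.map Complex.ofReal)⁻¹ * A₁₁.map Complex.ofReal
      * A₁₂.map Complex.ofReal + A₂₂.map Complex.ofReal := by
    rw [hAhat, ← hinv]
    exact (map_add Complex.ofRealHom.mapMatrix _ _).trans (by simp only [map_mul]; rfl)
  have hBmap : Bhat.map Complex.ofReal = A₂₁.map Complex.ofReal * A₁₂.map Complex.ofReal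
      - A₂₂.map Complex.ofReal * (A₁₂.map Complex.ofReal)⁻¹ * A₁₁.map Complex.ofReal
      * A₁₂.map Complex.ofReal := by
    rw [hBhat, ← hinv]
    exact (map_sub Complex.ofRealHom.mapMatrix _ _).trans (by simp only [map_mul]; rfl)
  have h₁₂ : IsUnit (A₁₂.map Complex.ofReal).det :=
    (RingHom.map_det Complex.ofRealHom A₁₂ ▸ h12.map Complex.ofRealHom)
  rw [fromBlocks_map] at hlam
  have hpencil := det_eq_zero_of_mem_spectrum_fromBlocks h₁₂ hlam
  rw [← hAmap, ← hBmap] at hpencil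
  exact det_sq_smul_one_sub_smul_sub_ne_zero hθ.2 (fun i => (hAneg i).le)
    (fun i => (hAdom i).le) (fun i => (hBneg i).le) hBdom hle hpencil
end
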